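/- arXiv:2508.20246 — 3 statements merged into one kernel-verified Lean document; each statement's English description precedes it below -/
import Mathlib

section
/- Let F be a family of subsets of Fin n that is downward closed (T ⊆ S and S ∈ F imply T ∈ F) and contains the empty set. Let (X_1,U_1),…,(X_n,U_n) be independent pairs of real random variables on a probability space, with each X_i nonnegative and integrable. For each i let A_i be an event measurable with respect to σ(X_i,U_i), and define the random variable Y_i := 1_{A_i}·E[X_i | A_i] if P(A_i) > 0 and Y_i := 0 otherwise (where E[X_i | A_i] = E[X_i·1_{A_i}]/P(A_i)). Then E[ max_{S∈F} Σ_{i∈S} Y_i ] ≤ E[ max_{S∈F} Σ_{i∈S} X_i ]. (This is the reduction step showing that replacing each value by its conditional expectation on an acceptance event, and by 0 otherwise, can only decrease the ex post optimum; it drives the Bernoulli reductions in the paper's correlation-gap lemma and in its theorem equating the frugal correlation gap with the ex ante free-order prophet inequality.) -/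
/-!
Let `Zᵢ = 1_{Aᵢ} Xᵢ`. An atom of the finite partition generated by the events `A j` on which
`Aᵢ` occurs has the form `Aᵢ ∩ D`, where `D` is determined by the pairs `(X j, U j)`, `j ≠ i`,
so it is independent of `(Xᵢ, Uᵢ)`; hence the average of `Zᵢ` over that atom is
`E[Xᵢ ∣ Aᵢ]`, and over the other atoms it is `0`. So `Yᵢ` is the conditional expectation of
`Zᵢ` given this partition, and conditional Jensen for the convex map
`z ↦ max_{S ∈ F} ∑_{i ∈ S} zᵢ` gives `E max ∑ Y ≤ E max ∑ Z ≤ E max ∑ X`, the last step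
because `Xᵢ ≥ 0`.
-/

open Finset MeasureTheory ProbabilityTheory

section

variable {Ω : Type*} {mΩ : MeasurableSpace Ω} {μ : Measure Ω}

theorem integrable_finset_sup' {ι β : Type*} [NormedAddCommGroup β] [Lattice β] [HasSolidNorm β]
    [IsOrderedAddMonoid β] {s : Finset ι} (hs : s.Nonempty) {f : ι → Ω → β}
    (hf : ∀ i ∈ s, Integrable (f i) μ) :
    Integrable (fun ω => s.sup' hs (fun i => f i ω)) μ :=
  (Finset.sup'_induction (p := fun g => Integrable g μ) hs f (fun _ hg _ hh => hg.sup hh) hf).congr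
    (.of_forall fun ω => Finset.sup'_apply hs f ω)

theorem integral_eq_sum_setIntegral_fiber {E K : Type*} [NormedAddCommGroup E] [NormedSpace ℝ E]
    [Fintype K] {κ : Ω → K} (hκ : ∀ k, MeasurableSet (κ ⁻¹' {k})) {g : Ω → E}
    (hg : ∀ k, IntegrableOn g (κ ⁻¹' {k}) μ) :
    ∫ ω, g ω ∂μ = ∑ k, ∫ ω in κ ⁻¹' {k}, g ω ∂μ := by
  rw [← integral_iUnion_fintype hκ (pairwise_disjoint_fiber κ) hg, ← Set.preimage_iUnion,
    Set.iUnion_of_singleton, Set.preimage_univ, setIntegral_univ]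

/-- Jensen's inequality for the convex map `z ↦ max_{S ∈ F} ∑_{i ∈ S} zᵢ`, conditionally on the
partition into the fibres of `κ`, on which `Y` takes the averages of `Z`. -/
theorem integral_sup'_sum_le_of_setIntegral_fiber [IsFiniteMeasure μ] {ι K : Type*} [Fintype K]
    {κ : Ω → K} (hκ : ∀ k, MeasurableSet (κ ⁻¹' {k})) {F : Finset (Finset ι)} (hF : F.Nonempty)
    {c : ι → K → ℝ} {Y Z : ι → Ω → ℝ} (hY : ∀ i ω, Y i ω = c i (κ ω))
    (hZ : ∀ i, Integrable (Z i) μ)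
    (hZc : ∀ i k, ∫ ω in κ ⁻¹' {k}, Z i ω ∂μ = μ.real (κ ⁻¹' {k}) * c i k) :
    ∫ ω, F.sup' hF (fun S => ∑ i ∈ S, Y i ω) ∂μ
      ≤ ∫ ω, F.sup' hF (fun S => ∑ i ∈ S, Z i ω) ∂μ := by
  have hZmax : Integrable (fun ω => F.sup' hF (fun S => ∑ i ∈ S, Z i ω)) μ :=
    integrable_finset_sup' hF fun S _ => integrable_finsetSum S fun i _ => hZ i
  have hY_fiber : ∀ k, Set.EqOn (fun ω => F.sup' hF (fun S => ∑ i ∈ S, Y i ω))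
      (fun _ => F.sup' hF (fun S => ∑ i ∈ S, c i k)) (κ ⁻¹' {k}) := by
    intro k ω hω
    simp only [hY, Set.mem_singleton_iff.mp hω]
  have hYmax : ∀ k, IntegrableOn (fun ω => F.sup' hF (fun S => ∑ i ∈ S, Y i ω)) (κ ⁻¹' {k}) μ :=
    fun k => (integrableOn_const (measure_ne_top _ _)).congr_fun (hY_fiber k).symm (hκ k)
  rw [integral_eq_sum_setIntegral_fiber hκ hYmax,
    integral_eq_sum_setIntegral_fiber hκ fun k => hZmax.integrableOn]
  refine Finset.sum_le_sum fun k _ => ?_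
  rw [setIntegral_congr_fun (hκ k) (hY_fiber k), setIntegral_const, smul_eq_mul]
  obtain ⟨S₀, hS₀, hmax⟩ := F.exists_mem_eq_sup' hF (fun S => ∑ i ∈ S, c i k)
  calc μ.real (κ ⁻¹' {k}) * F.sup' hF (fun S => ∑ i ∈ S, c i k)
      = ∑ i ∈ S₀, ∫ ω in κ ⁻¹' {k}, Z i ω ∂μ := by rw [hmax, Finset.mul_sum]; simp only [hZc]
    _ = ∫ ω in κ ⁻¹' {k}, ∑ i ∈ S₀, Z i ω ∂μ :=
      (integral_finsetSum _ fun i _ => (hZ i).integrableOn).symm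
    _ ≤ ∫ ω in κ ⁻¹' {k}, F.sup' hF (fun S => ∑ i ∈ S, Z i ω) ∂μ :=
      setIntegral_mono (integrable_finsetSum _ fun i _ => hZ i).integrableOn hZmax.integrableOn
        fun ω => F.le_sup' (fun S => ∑ i ∈ S, Z i ω) hS₀

end

namespace ProbabilityTheory

variable {Ω : Type*} {mΩ : MeasurableSpace Ω} {μ : Measure Ω}

theorem Indep.setIntegral_eq_measureReal_smul {E : Type*} [NormedAddCommGroup E]
    [NormedSpace ℝ E] [CompleteSpace E] [IsFiniteMeasure μ] {m₁ m₂ : MeasurableSpace Ω}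
    (hle₁ : m₁ ≤ mΩ) (hle₂ : m₂ ≤ mΩ) (hind : Indep m₁ m₂ μ) {f : Ω → E}
    (hf : StronglyMeasurable[m₁] f) (hfi : Integrable f μ) {D : Set Ω}
    (hD : MeasurableSet[m₂] D) :
    ∫ ω in D, f ω ∂μ = μ.real D • ∫ ω, f ω ∂μ := by
  rw [← setIntegral_condExp hle₂ hfi hD, ← setIntegral_const]
  exact setIntegral_congr_ae (hle₂ _ hD) <| by
    filter_upwards [condExp_indep_eq hle₁ hle₂ hf hind] with ω h _ using h

end ProbabilityTheory

section

variable {Ω ι : Type*} {mΩ : MeasurableSpace Ω} {μ : Measure Ω}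

def indicesContaining (A : ι → Set Ω) (ω : Ω) : Set ι := {i | ω ∈ A i}

theorem indicesContaining_preimage_singleton (A : ι → Set Ω) (k : Set ι) :
    indicesContaining A ⁻¹' {k} = {ω | ∀ j, ω ∈ A j ↔ j ∈ k} := by
  ext ω
  simp [indicesContaining, Set.ext_iff]

theorem measurableSet_setOf_forall_mem_iff [Countable ι] {m : MeasurableSpace Ω} {A : ι → Set Ω}
    {T : Set ι} (hA : ∀ j ∈ T, MeasurableSet[m] (A j)) (k : Set ι) :
    MeasurableSet[m] {ω | ∀ j ∈ T, ω ∈ A j ↔ j ∈ k} := by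
  rw [show {ω | ∀ j ∈ T, ω ∈ A j ↔ j ∈ k} = ⋂ j ∈ T, {ω | ω ∈ A j ↔ j ∈ k} by ext; simp]
  refine MeasurableSet.biInter T.to_countable fun j hj => ?_
  by_cases hjk : j ∈ k
  · simp only [hjk, iff_true]
    exact hA j hj
  · simp only [hjk, iff_false]
    exact (hA j hj).compl

theorem measurableSet_indicesContaining_preimage [Countable ι] {A : ι → Set Ω}
    (hA : ∀ j, MeasurableSet (A j)) (k : Set ι) :
    MeasurableSet (indicesContaining A ⁻¹' {k}) := by
  simpa [indicesContaining_preimage_singleton] using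
    measurableSet_setOf_forall_mem_iff (T := Set.univ) (fun j _ => hA j) k

open Classical in
theorem setIntegral_indicator_indicesContaining_preimage [Countable ι] [IsFiniteMeasure μ]
    {m : ι → MeasurableSpace Ω} (h_le : ∀ j, m j ≤ mΩ) (h_ind : iIndep m μ) {A : ι → Set Ω}
    (hA : ∀ j, MeasurableSet[m j] (A j)) {i : ι} {f : Ω → ℝ} (hf : StronglyMeasurable[m i] f)
    (hfi : Integrable f μ) (k : Set ι) :
    ∫ ω in indicesContaining A ⁻¹' {k}, (A i).indicator f ω ∂μ
      = μ.real (indicesContaining A ⁻¹' {k})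
        * if i ∈ k then (∫ ω in A i, f ω ∂μ) / μ.real (A i) else 0 := by
  have hAm : ∀ j, MeasurableSet (A j) := fun j => h_le j _ (hA j)
  rw [setIntegral_indicator (hAm i)]
  split_ifs with hik
  · -- `D` only involves the events `A j`, `j ≠ i`, so it is independent of `m i`.
    set D := {ω | ∀ j ∈ ({i}ᶜ : Set ι), ω ∈ A j ↔ j ∈ k}
    have hfiber : indicesContaining A ⁻¹' {k} = A i ∩ D := by
      rw [indicesContaining_preimage_singleton]
      ext ω
      refine ⟨fun h => ⟨(h i).2 hik, fun j _ => h j⟩, fun ⟨hωi, h⟩ j => ?_⟩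
      by_cases hj : j = i
      · subst hj
        exact iff_of_true hωi hik
      · exact h j hj
    have hind : Indep (m i) (⨆ j ∈ ({i}ᶜ : Set ι), m j) μ := by
      simpa using indep_iSup_of_disjoint h_le h_ind (disjoint_compl_right (a := ({i} : Set ι)))
    have hD : MeasurableSet[⨆ j ∈ ({i}ᶜ : Set ι), m j] D :=
      measurableSet_setOf_forall_mem_iff
        (fun j hj => le_iSup₂ (f := fun j (_ : j ∈ ({i}ᶜ : Set ι)) => m j) j hj _ (hA j)) k
    have hint : ∫ ω in A i ∩ D, f ω ∂μ = μ.real D * ∫ ω in A i, f ω ∂μ := by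
      rw [Set.inter_comm, ← setIntegral_indicator (hAm i),
        hind.setIntegral_eq_measureReal_smul (h_le i) (iSup₂_le fun j _ => h_le j)
          (hf.indicator (hA i)) (hfi.indicator (hAm i)) hD,
        integral_indicator (hAm i), smul_eq_mul]
    have hmeas : μ.real (A i ∩ D) = μ.real (A i) * μ.real D := by
      rw [measureReal_def, (Indep_iff _ _ _).1 hind _ _ (hA i) hD, ENNReal.toReal_mul]
      rfl
    have hnull : μ.real (A i) = 0 → ∫ ω in A i, f ω ∂μ = 0 :=
      fun h => setIntegral_measure_zero f ((measureReal_eq_zero_iff (measure_ne_top _ _)).1 h)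
    rw [hfiber, Set.inter_eq_left.2 Set.inter_subset_left, hint, hmeas,
      mul_comm (μ.real (A i)), mul_assoc, mul_comm (μ.real (A i)), div_mul_cancel_of_imp hnull]
  · have hempty : indicesContaining A ⁻¹' {k} ∩ A i = ∅ :=
      Set.eq_empty_iff_forall_notMem.2 fun ω ⟨hω, hωi⟩ =>
        hik (Set.mem_singleton_iff.1 hω ▸ hωi)
    rw [hempty, setIntegral_empty, mul_zero]

end

theorem stmt1_general (n : ℕ) (F : Finset (Finset (Fin n)))
    (hemp : ∅ ∈ F)
    {Ω : Type*} [MeasurableSpace Ω] (μ : Measure Ω) [IsProbabilityMeasure μ]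
    (X U : Fin n → Ω → ℝ)
    (hXmeas : ∀ i, Measurable (X i)) (hUmeas : ∀ i, Measurable (U i))
    (hindep : iIndepFun (fun i ω => (X i ω, U i ω)) μ)
    (hXnonneg : ∀ i ω, 0 ≤ X i ω) (hXint : ∀ i, Integrable (X i) μ)
    (A : Fin n → Set Ω)
    (hA : ∀ i, MeasurableSet[MeasurableSpace.comap (fun ω => (X i ω, U i ω)) inferInstance] (A i))
    (Y : Fin n → Ω → ℝ)
    (hY : ∀ i, Y i = (A i).indicator (fun _ => (∫ ω in A i, X i ω ∂μ) / (μ (A i)).toReal)) :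
    ∫ ω, F.sup' ⟨∅, hemp⟩ (fun S => ∑ i ∈ S, Y i ω) ∂μ
      ≤ ∫ ω, F.sup' ⟨∅, hemp⟩ (fun S => ∑ i ∈ S, X i ω) ∂μ := by
  have h_le : ∀ i, MeasurableSpace.comap (fun ω => (X i ω, U i ω)) inferInstance ≤ ‹_› :=
    fun i => ((hXmeas i).prodMk (hUmeas i)).comap_le
  have hAm : ∀ i, MeasurableSet (A i) := fun i => h_le i _ (hA i)
  have hZ : ∀ i, Integrable ((A i).indicator (X i)) μ := fun i => (hXint i).indicator (hAm i)
  have hsum_le : ∀ ω, ∀ S ∈ F, ∑ i ∈ S, (A i).indicator (X i) ω ≤ ∑ i ∈ S, X i ω :=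
    fun ω S _ => Finset.sum_le_sum fun i _ => Set.indicator_le_self' (fun ω _ => hXnonneg i ω) ω
  calc _ ≤ ∫ ω, F.sup' ⟨∅, hemp⟩ (fun S => ∑ i ∈ S, (A i).indicator (X i) ω) ∂μ :=
        integral_sup'_sum_le_of_setIntegral_fiber (measurableSet_indicesContaining_preimage hAm)
          ⟨∅, hemp⟩ (fun i ω => by rw [hY i]; rfl)
          hZ fun i k => setIntegral_indicator_indicesContaining_preimage h_le
            ((iIndepFun_iff_iIndep _ _ _).1 hindep) hA
            (measurable_fst.comp (comap_measurable _)).stronglyMeasurable (hXint i) k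
    _ ≤ _ :=
      integral_mono (integrable_finset_sup' _ fun S _ => integrable_finsetSum S fun i _ => hZ i)
        (integrable_finset_sup' _ fun S _ => integrable_finsetSum S fun i _ => hXint i)
        fun ω => Finset.sup'_mono_fun (hsum_le ω)

/-- Replacing each value by its conditional expectation on an acceptance event
(measurable with respect to `σ(X i, U i)`), and by `0` otherwise, can only decrease
the ex post optimum. -/
theorem stmt1 (n : ℕ) (F : Finset (Finset (Fin n)))
    (hdc : ∀ S ∈ F, ∀ T ⊆ S, T ∈ F) (hemp : ∅ ∈ F)
    {Ω : Type*} [MeasurableSpace Ω] (μ : Measure Ω) [IsProbabilityMeasure μ]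
    (X U : Fin n → Ω → ℝ)
    (hXmeas : ∀ i, Measurable (X i)) (hUmeas : ∀ i, Measurable (U i))
    (hindep : iIndepFun (fun i ω => (X i ω, U i ω)) μ)
    (hXnonneg : ∀ i ω, 0 ≤ X i ω) (hXint : ∀ i, Integrable (X i) μ)
    (A : Fin n → Set Ω)
    (hA : ∀ i, MeasurableSet[MeasurableSpace.comap (fun ω => (X i ω, U i ω)) inferInstance] (A i))
    (Y : Fin n → Ω → ℝ)
    (hY : ∀ i, Y i = (A i).indicator (fun _ => (∫ ω in A i, X i ω ∂μ) / (μ (A i)).toReal)) :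
    ∫ ω, F.sup' ⟨∅, hemp⟩ (fun S => ∑ i ∈ S, Y i ω) ∂μ
      ≤ ∫ ω, F.sup' ⟨∅, hemp⟩ (fun S => ∑ i ∈ S, X i ω) ∂μ :=
  stmt1_general n F hemp μ X U hXmeas hUmeas hindep hXnonneg hXint A hA Y hY
end

section
/- Let X_1,…,X_n be nonnegative integrable real random variables on a probability space Ω (not necessarily independent), and let S : Ω → Finset (Fin n) be a measurable selection rule with marginals q_i = P(i ∈ S). Then E[ Σ_{i∈S} X_i ] ≤ Σ_{i=1}^n sup{ E[X_i·φ(X_i)] : φ : ℝ → [0,1] measurable with E[φ(X_i)] ≤ q_i }. (This is the coordinatewise decomposition showing that the value of any ex ante feasible selection rule is bounded by the sum over elements of the optimal single-element fractional acceptance values under the rule's marginal acceptance probabilities, i.e., by Σ_i q_i·F_{D_i}(q_i) in the paper's notation.) -/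
/-!
Take for `φ_i` the conditional acceptance probability `P(i ∈ S | X_i)`, i.e. a measurable version
of `E[1{i ∈ S} | σ(X_i)]` factored through `X_i`. It takes values in `[0, 1]`, has mean `q_i`, and by
the pull-out property `E[X_i φ_i(X_i)] = E[X_i 1{i ∈ S}]`. Summing over `i` gives the bound.
-/

open Finset MeasureTheory

section FractionalRule

variable {Ω : Type*} [m₀ : MeasurableSpace Ω] {μ : Measure Ω} {X : Ω → ℝ} {A : Set Ω}

theorem condExp_indicator_one_mem_Icc [IsFiniteMeasure μ] (hA : MeasurableSet A)
    {m : MeasurableSpace Ω} (hm : m ≤ m₀) :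
    ∀ᵐ ω ∂μ, μ[A.indicator (fun _ ↦ (1 : ℝ)) | m] ω ∈ Set.Icc 0 1 := by
  have hle : μ[A.indicator (fun _ ↦ (1 : ℝ)) | m] ≤ᵐ[μ] μ[fun _ ↦ (1 : ℝ) | m] :=
    condExp_mono ((integrable_const 1).indicator hA) (integrable_const 1)
      (ae_of_all _ (Set.indicator_le_self' fun _ _ ↦ zero_le_one))
  filter_upwards [condExp_nonneg (m := m) (f := A.indicator (fun _ ↦ (1 : ℝ)))
      (ae_of_all μ (Set.indicator_nonneg fun _ _ ↦ zero_le_one)), hle]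
    with ω h0 h1
  exact ⟨h0, by simpa [condExp_const hm] using h1⟩

theorem exists_measurable_comp_ae_eq_condExp_indicator_one [IsFiniteMeasure μ]
    (hX : Measurable X) (hA : MeasurableSet A) :
    ∃ φ : ℝ → ℝ, Measurable φ ∧ (∀ s, 0 ≤ φ s ∧ φ s ≤ 1) ∧
      (fun ω ↦ φ (X ω)) =ᵐ[μ]
        μ[A.indicator (fun _ ↦ (1 : ℝ)) | MeasurableSpace.comap X inferInstance] := by
  obtain ⟨g, hg, hgX⟩ :=
    (stronglyMeasurable_condExp (μ := μ) (f := A.indicator (fun _ ↦ (1 : ℝ)))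
      (m := MeasurableSpace.comap X inferInstance)).measurable.exists_eq_measurable_comp
  refine ⟨fun s ↦ max 0 (min 1 (g s)), by fun_prop,
    fun s ↦ ⟨le_max_left _ _, max_le zero_le_one (min_le_left _ _)⟩, ?_⟩
  filter_upwards [condExp_indicator_one_mem_Icc (μ := μ) hA hX.comap_le] with ω hω
  rw [hgX, Function.comp_apply] at hω ⊢
  rw [min_eq_right hω.2, max_eq_right hω.1]

theorem exists_fractionalRule_eq_indicator [IsFiniteMeasure μ] (hX : Measurable X)
    (hXint : Integrable X μ) (hA : MeasurableSet A) :
    ∃ φ : ℝ → ℝ, Measurable φ ∧ (∀ s, 0 ≤ φ s ∧ φ s ≤ 1) ∧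
      ∫ ω, φ (X ω) ∂μ = μ.real A ∧ ∫ ω, X ω * φ (X ω) ∂μ = ∫ ω, A.indicator X ω ∂μ := by
  obtain ⟨φ, hφ, hφ01, hφX⟩ := exists_measurable_comp_ae_eq_condExp_indicator_one (μ := μ) hX hA
  refine ⟨φ, hφ, hφ01, (integral_congr_ae hφX).trans (integral_condExp_indicator hX hA), ?_⟩
  have hXA : X * A.indicator (fun _ ↦ (1 : ℝ)) = A.indicator X := by
    ext ω; by_cases h : ω ∈ A <;> simp [h]
  have pull_out := condExp_mul_of_stronglyMeasurable_left (μ := μ)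
    (comap_measurable X).stronglyMeasurable (hXA ▸ hXint.indicator hA)
    ((integrable_const 1).indicator hA)
  calc ∫ ω, X ω * φ (X ω) ∂μ
      = ∫ ω, μ[X * A.indicator (fun _ ↦ (1 : ℝ)) | MeasurableSpace.comap X inferInstance] ω ∂μ :=
        integral_congr_ae ((Filter.EventuallyEq.rfl.mul hφX).trans pull_out.symm)
    _ = ∫ ω, A.indicator X ω ∂μ := by rw [integral_condExp hX.comap_le, hXA]

theorem bddAbove_fractionalRule_values (hXint : Integrable X μ) (q : ℝ) :
    BddAbove {v : ℝ | ∃ φ : ℝ → ℝ, Measurable φ ∧ (∀ s, 0 ≤ φ s ∧ φ s ≤ 1) ∧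
      ∫ ω, φ (X ω) ∂μ ≤ q ∧ v = ∫ ω, X ω * φ (X ω) ∂μ} := by
  refine ⟨∫ ω, |X ω| ∂μ, ?_⟩
  rintro _ ⟨φ, hφ, hφ01, -, rfl⟩
  have hφX : Integrable (fun ω ↦ X ω * φ (X ω)) μ :=
    hXint.mul_bdd (hφ.comp_aemeasurable hXint.aemeasurable).aestronglyMeasurable
      (c := 1) (ae_of_all _ fun ω ↦ by
        rw [Real.norm_eq_abs, abs_le]; constructor <;> linarith [hφ01 (X ω)])
  refine integral_mono hφX hXint.abs fun ω ↦ ?_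
  obtain ⟨h0, h1⟩ := hφ01 (X ω)
  calc X ω * φ (X ω) ≤ |X ω| * φ (X ω) := mul_le_mul_of_nonneg_right (le_abs_self _) h0
    _ ≤ |X ω| := mul_le_of_le_one_right (abs_nonneg _) h1

end FractionalRule

theorem stmt3_general (n : ℕ) {Ω : Type*} [MeasurableSpace Ω] (μ : Measure Ω)
    [IsProbabilityMeasure μ]
    (X : Fin n → Ω → ℝ) (hXmeas : ∀ i, Measurable (X i))
    (hXint : ∀ i, Integrable (X i) μ)
    (S : Ω → Finset (Fin n)) (hSmeas : ∀ i, MeasurableSet {ω | i ∈ S ω}) :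
    (∫ ω, ∑ i ∈ S ω, X i ω ∂μ)
      ≤ ∑ i : Fin n, sSup {v : ℝ | ∃ φ : ℝ → ℝ, Measurable φ ∧
          (∀ s, 0 ≤ φ s ∧ φ s ≤ 1) ∧
          (∫ ω, φ (X i ω) ∂μ) ≤ (μ {ω | i ∈ S ω}).toReal ∧
          v = ∫ ω, X i ω * φ (X i ω) ∂μ} := by
  have hsum : ∀ ω, ∑ i ∈ S ω, X i ω = ∑ i, {ω' | i ∈ S ω'}.indicator (X i) ω := fun ω ↦ by
    simp [Set.indicator_apply, Finset.sum_ite_mem]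
  simp_rw [hsum]
  rw [integral_finsetSum _ fun i _ ↦ (hXint i).indicator (hSmeas i)]
  gcongr with i
  obtain ⟨φ, hφ, hφ01, hφq, hφv⟩ :=
    exists_fractionalRule_eq_indicator (hXmeas i) (hXint i) (hSmeas i)
  exact le_csSup (bddAbove_fractionalRule_values (hXint i) _)
    ⟨φ, hφ, hφ01, hφq.le, hφv.symm⟩

/-- The value of any ex ante feasible selection rule is bounded by the sum over
elements of the optimal single-element fractional acceptance values under the
rule's marginal acceptance probabilities. -/
theorem stmt3 (n : ℕ) {Ω : Type*} [MeasurableSpace Ω] (μ : Measure Ω)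
    [IsProbabilityMeasure μ]
    (X : Fin n → Ω → ℝ) (hXmeas : ∀ i, Measurable (X i))
    (hXnonneg : ∀ i ω, 0 ≤ X i ω) (hXint : ∀ i, Integrable (X i) μ)
    (S : Ω → Finset (Fin n)) (hSmeas : ∀ i, MeasurableSet {ω | i ∈ S ω}) :
    (∫ ω, ∑ i ∈ S ω, X i ω ∂μ)
      ≤ ∑ i : Fin n, sSup {v : ℝ | ∃ φ : ℝ → ℝ, Measurable φ ∧
          (∀ s, 0 ≤ φ s ∧ φ s ≤ 1) ∧
          (∫ ω, φ (X i ω) ∂μ) ≤ (μ {ω | i ∈ S ω}).toReal ∧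
          v = ∫ ω, X i ω * φ (X i ω) ∂μ} :=
  stmt3_general n μ X hXmeas hXint S hSmeas
end

section
/- Let F be a family of subsets of Fin n that is downward closed (T ⊆ S and S ∈ F imply T ∈ F) and contains the empty set, and let c ≥ 1 be a real number such that for every x ∈ P(F) and every y : Fin n → ℝ with y ≥ 0 coordinatewise, Σ_{i=1}^n x_i·y_i ≤ c · E[ max over S ∈ F with S ⊆ R(x) of Σ_{i∈S} y_i ]. Then for every tuple of independent nonnegative integrable random variables X_1,…,X_n on a probability space Ω and every measurable selection rule S : Ω → Finset (Fin n) whose marginal vector (P(1∈S),…,P(n∈S)) lies in P(F), one has E[ Σ_{i∈S} X_i ] ≤ c · E[ max_{T∈F} Σ_{i∈T} X_i ]. (This is the direction of the paper's Lemma stating that the gap between the ex ante and ex post optima of any Bayesian combinatorial selection instance over F is bounded by the correlation gap of F.) -/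
open Finset MeasureTheory ProbabilityTheory

/-!
Write `q i = P(i ∈ S)` and let `p i = P(i ∈ S | X i)`, a function of `X i` alone. With
`y i = E[X i; i ∈ S] / q i` the value of the selection rule is `∑ i, q i * y i`, which the
correlation gap bounds by `c * E[max {∑ i ∈ T, y i | T ∈ F, T ⊆ R(q)}]`.

Now put each `i` into a random set `R` independently with probability `p i`. Because the `X i`
are independent, `R` has the law of `R(q)`, and for `i ∈ A` one gets
`E[X i; R = A] = P(R(q) = A) * y i`. So the term of `A` in the correlation-gap bound is at most
`E[max_{T ∈ F} ∑ i ∈ T, X i; R = A]`, and summing over `A` gives the ex post optimum. No extra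
randomness is needed: the conditional probability `∏ i ∈ A, p i * ∏ i ∉ A, (1 - p i)` of
`R = A` given the `X i` serves directly as a weight.
-/

section BernoulliWeight

variable {ι : Type*} [Fintype ι] [DecidableEq ι]

/-- The probability that the random set `R(x)`, containing each `i` independently with
probability `x i`, equals `A`. -/
def bernoulliWeight (x : ι → ℝ) (A : Finset ι) : ℝ :=
  (∏ i ∈ A, x i) * ∏ i ∈ Aᶜ, (1 - x i)

def weightedRank (F : Finset (Finset ι)) (hF : ∅ ∈ F) (y : ι → ℝ) (A : Finset ι) : ℝ :=
  (F.filter (fun S => S ⊆ A)).sup' ⟨∅, mem_filter.mpr ⟨hF, empty_subset _⟩⟩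
    (fun S => ∑ i ∈ S, y i)

lemma bernoulliWeight_eq_prod_ite (x : ι → ℝ) (A : Finset ι) :
    bernoulliWeight x A = ∏ i, if i ∈ A then x i else 1 - x i := by
  rw [prod_ite, bernoulliWeight]
  congr 1 <;> apply prod_congr <;> simp [Finset.ext_iff]

lemma sum_bernoulliWeight (x : ι → ℝ) : ∑ A ∈ univ.powerset, bernoulliWeight x A = 1 := by
  simp only [bernoulliWeight, compl_eq_univ_sdiff, ← prod_add, add_sub_cancel, prod_const_one]

lemma bernoulliWeight_mem_Icc {x : ι → ℝ} (hx : ∀ i, x i ∈ Set.Icc 0 1) (A : Finset ι) :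
    bernoulliWeight x A ∈ Set.Icc 0 1 := by
  have h0 : ∀ i, 0 ≤ x i := fun i => (hx i).1
  have h1 : ∀ i, x i ≤ 1 := fun i => (hx i).2
  rw [bernoulliWeight_eq_prod_ite]
  constructor
  · exact prod_nonneg fun i _ => by split_ifs <;> linarith [h0 i, h1 i]
  · exact prod_le_one (fun i _ => by split_ifs <;> linarith [h0 i, h1 i])
      fun i _ => by split_ifs <;> linarith [h0 i, h1 i]

lemma bernoulliWeight_update_mul {x : ι → ℝ} {A : Finset ι} {i : ι} (hi : i ∈ A) (t : ℝ) :
    bernoulliWeight (Function.update x i (x i * t)) A = bernoulliWeight x A * t := by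
  have hcompl : ∏ j ∈ Aᶜ, (1 - Function.update x i (x i * t) j) = ∏ j ∈ Aᶜ, (1 - x j) :=
    prod_congr rfl fun j hj => by
      rw [Function.update_of_ne (ne_of_mem_of_not_mem hj (by simpa using hi))]
  rw [bernoulliWeight, bernoulliWeight, hcompl, prod_update_of_mem hi,
    prod_eq_mul_prod_sdiff_singleton_of_mem hi]
  ring

end BernoulliWeight

section Independence

variable {ι Ω : Type*} [Fintype ι] {m0 : MeasurableSpace Ω} {μ : Measure Ω}
  {m : ι → MeasurableSpace Ω}

lemma ProbabilityTheory.iIndep.integral_prod_eq_prod_integral (hm : ∀ i, m i ≤ m0)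
    (hindep : iIndep m μ) {f : ι → Ω → ℝ} (hf : ∀ i, Measurable[m i] (f i)) :
    ∫ ω, ∏ i, f i ω ∂μ = ∏ i, ∫ ω, f i ω ∂μ := by
  have hfindep : iIndepFun f μ := (iIndepFun_iff_iIndep _ f μ).2 <|
    iIndep_of_iIndep_of_le hindep fun i => (hf i).comap_le
  exact hfindep.integral_fun_prod_eq_prod_integral fun i =>
    ((hf i).mono (hm i) le_rfl).aestronglyMeasurable

variable [DecidableEq ι]

lemma integral_bernoulliWeight (hm : ∀ i, m i ≤ m0) (hindep : iIndep m μ) {f : ι → Ω → ℝ}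
    (hf : ∀ i, Measurable[m i] (f i)) (hfint : ∀ i, Integrable (f i) μ) (A : Finset ι) :
    ∫ ω, bernoulliWeight (f · ω) A ∂μ = bernoulliWeight (fun i => ∫ ω, f i ω ∂μ) A := by
  have := hindep.isProbabilityMeasure
  have hfactor : ∀ i, Measurable[m i] fun ω => if i ∈ A then f i ω else 1 - f i ω := fun i => by
    split_ifs
    exacts [hf i, measurable_const.sub (hf i)]
  simp_rw [bernoulliWeight_eq_prod_ite]
  rw [hindep.integral_prod_eq_prod_integral hm hfactor]
  refine prod_congr rfl fun i _ => ?_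
  split_ifs
  · rfl
  · rw [integral_sub (integrable_const 1) (hfint i)]
    simp

lemma integral_bernoulliWeight_mul (hm : ∀ i, m i ≤ m0) (hindep : iIndep m μ)
    {p : ι → Ω → ℝ} (hp : ∀ i, Measurable[m i] (p i)) (hpint : ∀ i, Integrable (p i) μ)
    {A : Finset ι} {i : ι} (hi : i ∈ A) {h : Ω → ℝ} (hh : Measurable[m i] h)
    (hph : Integrable (fun ω => p i ω * h ω) μ) :
    ∫ ω, bernoulliWeight (p · ω) A * h ω ∂μ
      = bernoulliWeight (Function.update (fun j => ∫ ω, p j ω ∂μ) i (∫ ω, p i ω * h ω ∂μ)) A := by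
  set p' := Function.update p i fun ω => p i ω * h ω
  have hp' : ∀ j, Measurable[m j] (p' j) := fun j => by
    rcases eq_or_ne j i with rfl | hj
    · simp only [p', Function.update_self]
      exact (hp j).mul hh
    · simpa [p', hj] using hp j
  have hp'int : ∀ j, Integrable (p' j) μ := fun j => by
    rcases eq_or_ne j i with rfl | hj
    · simpa [p'] using hph
    · simpa [p', hj] using hpint j
  have hpoint : ∀ ω, bernoulliWeight (p · ω) A * h ω = bernoulliWeight (p' · ω) A := fun ω => by
    rw [← bernoulliWeight_update_mul hi]
    congr 1
    ext j
    rcases eq_or_ne j i with rfl | hj <;> simp [p', *]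
  simp_rw [hpoint]
  rw [integral_bernoulliWeight hm hindep hp' hp'int]
  congr 1
  ext j
  rcases eq_or_ne j i with rfl | hj <;> simp [p', *]

end Independence

section Rounding

variable {ι Ω : Type*} [Fintype ι] {m0 : MeasurableSpace Ω} {μ : Measure Ω}

lemma MeasureTheory.Integrable.bdd_mul_of_ae_mem_Icc {f g : Ω → ℝ} (hg : Integrable g μ)
    (hf : AEStronglyMeasurable f μ) (hf01 : ∀ᵐ ω ∂μ, f ω ∈ Set.Icc 0 1) :
    Integrable (fun ω => f ω * g ω) μ :=
  hg.bdd_mul hf <| hf01.mono fun ω hω => by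
    rw [Real.norm_of_nonneg hω.1]
    exact hω.2

lemma integrable_sup'_sum {F : Finset (Finset ι)} (hF : F.Nonempty) {X : ι → Ω → ℝ}
    (hX : ∀ i, Measurable (X i)) (hX0 : ∀ i ω, 0 ≤ X i ω) (hXint : ∀ i, Integrable (X i) μ) :
    Integrable (fun ω => F.sup' hF fun T => ∑ i ∈ T, X i ω) μ := by
  have hmeas : Measurable fun ω => F.sup' hF fun T => ∑ i ∈ T, X i ω := by
    have hfun : (fun ω => F.sup' hF fun T => ∑ i ∈ T, X i ω)
        = F.sup' hF fun T ω => ∑ i ∈ T, X i ω := by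
      ext ω
      exact (Finset.sup'_apply (C := fun _ => ℝ) (s := F) _ (fun T ω => ∑ i ∈ T, X i ω) ω).symm
    rw [hfun]
    exact Finset.measurable_sup' _ fun T _ => measurable_sum T fun i _ => hX i
  refine (integrable_finsetSum univ fun i _ => hXint i).mono' hmeas.aestronglyMeasurable
    (ae_of_all _ fun ω => ?_)
  obtain ⟨T, hT⟩ := hF
  rw [Real.norm_of_nonneg <|
    (sum_nonneg fun i _ => hX0 i ω).trans (le_sup' (fun T => ∑ i ∈ T, X i ω) hT)]
  exact sup'_le _ _ fun T _ => sum_le_sum_of_subset_of_nonneg (subset_univ T)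
    fun i _ _ => hX0 i ω

variable [DecidableEq ι] {m : ι → MeasurableSpace Ω}

lemma integrable_bernoulliWeight_mul {p : ι → Ω → ℝ} (hp : ∀ i, Measurable (p i))
    (hp01 : ∀ i, ∀ᵐ ω ∂μ, p i ω ∈ Set.Icc 0 1) (A : Finset ι) {g : Ω → ℝ}
    (hg : Integrable g μ) : Integrable (fun ω => bernoulliWeight (p · ω) A * g ω) μ := by
  refine hg.bdd_mul_of_ae_mem_Icc ?_ <|
    (ae_all_iff.2 hp01).mono fun ω hω => bernoulliWeight_mem_Icc hω A
  simp only [bernoulliWeight]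
  fun_prop

lemma bernoulliWeight_mul_weightedRank_le (F : Finset (Finset ι)) (hF : ∅ ∈ F)
    (hm : ∀ i, m i ≤ m0) (hindep : iIndep m μ) {X p : ι → Ω → ℝ}
    (hX : ∀ i, Measurable[m i] (X i)) (hX0 : ∀ i ω, 0 ≤ X i ω)
    (hXint : ∀ i, Integrable (X i) μ) (hp : ∀ i, Measurable[m i] (p i))
    (hp01 : ∀ i, ∀ᵐ ω ∂μ, p i ω ∈ Set.Icc 0 1) {q y : ι → ℝ}
    (hq : ∀ i, ∫ ω, p i ω ∂μ = q i) (hy : ∀ i, q i * y i = ∫ ω, p i ω * X i ω ∂μ)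
    (A : Finset ι) :
    bernoulliWeight q A * weightedRank F hF y A
      ≤ ∫ ω, bernoulliWeight (p · ω) A * F.sup' ⟨∅, hF⟩ (fun T => ∑ i ∈ T, X i ω) ∂μ := by
  have := hindep.isProbabilityMeasure
  have hpm : ∀ i, Measurable (p i) := fun i => (hp i).mono (hm i) le_rfl
  have hXm : ∀ i, Measurable (X i) := fun i => (hX i).mono (hm i) le_rfl
  have hWint : ∀ g : Ω → ℝ, Integrable g μ →
      Integrable (fun ω => bernoulliWeight (p · ω) A * g ω) μ :=
    fun _ => integrable_bernoulliWeight_mul hpm hp01 A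
  obtain ⟨T, hT, hTmax⟩ := exists_mem_eq_sup' (⟨∅, mem_filter.mpr ⟨hF, empty_subset _⟩⟩ :
    (F.filter (fun S => S ⊆ A)).Nonempty) (fun S => ∑ i ∈ S, y i)
  obtain ⟨hTF, hTA⟩ := mem_filter.1 hT
  have hpint : ∀ j, Integrable (p j) μ := fun j => by
    simpa using (integrable_const 1).bdd_mul_of_ae_mem_Icc (hpm j).aestronglyMeasurable (hp01 j)
  have hterm : ∀ i ∈ T, ∫ ω, bernoulliWeight (p · ω) A * X i ω ∂μ = bernoulliWeight q A * y i :=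
    fun i hi => by
      rw [integral_bernoulliWeight_mul hm hindep hp hpint (hTA hi) (hX i)
          ((hXint i).bdd_mul_of_ae_mem_Icc (hpm i).aestronglyMeasurable (hp01 i)),
        show (fun j => ∫ ω, p j ω ∂μ) = q from funext hq, ← hy i,
        bernoulliWeight_update_mul (hTA hi)]
  calc bernoulliWeight q A * weightedRank F hF y A
      = ∑ i ∈ T, bernoulliWeight q A * y i := by rw [weightedRank, hTmax, mul_sum]
    _ = ∫ ω, bernoulliWeight (p · ω) A * ∑ i ∈ T, X i ω ∂μ := by
        simp_rw [mul_sum]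
        rw [integral_finsetSum T fun i _ => hWint _ (hXint i)]
        exact sum_congr rfl fun i hi => (hterm i hi).symm
    _ ≤ _ := by
        refine integral_mono_ae (hWint _ (integrable_finsetSum T fun i _ => hXint i))
          (hWint _ (integrable_sup'_sum ⟨∅, hF⟩ hXm hX0 hXint))
          ((ae_all_iff.2 hp01).mono fun ω hω => ?_)
        exact mul_le_mul_of_nonneg_left (le_sup' (fun T => ∑ i ∈ T, X i ω) hTF)
          (bernoulliWeight_mem_Icc hω A).1

theorem sum_bernoulliWeight_mul_weightedRank_le (F : Finset (Finset ι)) (hF : ∅ ∈ F)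
    (hm : ∀ i, m i ≤ m0) (hindep : iIndep m μ) {X p : ι → Ω → ℝ}
    (hX : ∀ i, Measurable[m i] (X i)) (hX0 : ∀ i ω, 0 ≤ X i ω)
    (hXint : ∀ i, Integrable (X i) μ) (hp : ∀ i, Measurable[m i] (p i))
    (hp01 : ∀ i, ∀ᵐ ω ∂μ, p i ω ∈ Set.Icc 0 1) {q y : ι → ℝ}
    (hq : ∀ i, ∫ ω, p i ω ∂μ = q i) (hy : ∀ i, q i * y i = ∫ ω, p i ω * X i ω ∂μ) :
    ∑ A ∈ univ.powerset, bernoulliWeight q A * weightedRank F hF y A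
      ≤ ∫ ω, F.sup' ⟨∅, hF⟩ (fun T => ∑ i ∈ T, X i ω) ∂μ := by
  have hMint := integrable_sup'_sum ⟨∅, hF⟩ (fun i => (hX i).mono (hm i) le_rfl) hX0 hXint
  calc ∑ A ∈ univ.powerset, bernoulliWeight q A * weightedRank F hF y A
      ≤ ∑ A ∈ univ.powerset,
          ∫ ω, bernoulliWeight (p · ω) A * F.sup' ⟨∅, hF⟩ (fun T => ∑ i ∈ T, X i ω) ∂μ :=
        sum_le_sum fun A _ =>
          bernoulliWeight_mul_weightedRank_le F hF hm hindep hX hX0 hXint hp hp01 hq hy A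
    _ = ∫ ω, F.sup' ⟨∅, hF⟩ (fun T => ∑ i ∈ T, X i ω) ∂μ := by
        rw [← integral_finsetSum _ fun A _ => integrable_bernoulliWeight_mul
          (fun i => (hp i).mono (hm i) le_rfl) hp01 A hMint]
        simp_rw [← sum_mul, sum_bernoulliWeight, one_mul]

end Rounding

section CondExp

variable {Ω : Type*} {m m0 : MeasurableSpace Ω} {μ : Measure Ω}

lemma condExp_indicator_one_mem_Icc_s4 [IsFiniteMeasure μ] (hm : m ≤ m0) {B : Set Ω}
    (hB : MeasurableSet B) : ∀ᵐ ω ∂μ, μ[B.indicator 1 | m] ω ∈ Set.Icc (0 : ℝ) 1 := by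
  have hind : Integrable (B.indicator (1 : Ω → ℝ)) μ := (integrable_const 1).indicator hB
  have h0 := condExp_nonneg (m := m) (ae_of_all μ fun ω =>
    Set.indicator_nonneg (fun _ _ => zero_le_one) ω : 0 ≤ᵐ[μ] B.indicator (1 : Ω → ℝ))
  have h1 := condExp_mono (m := m) hind (integrable_const 1)
    (ae_of_all μ (Set.indicator_le_self' fun _ _ => zero_le_one))
  rw [condExp_const hm] at h1
  filter_upwards [h0, h1] with ω h0 h1 using ⟨h0, h1⟩

lemma integral_condExp_indicator_one_mul [IsFiniteMeasure μ] (hm : m ≤ m0) {B : Set Ω}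
    (hB : MeasurableSet B) {X : Ω → ℝ} (hX : StronglyMeasurable[m] X) (hXint : Integrable X μ) :
    ∫ ω, μ[B.indicator 1 | m] ω * X ω ∂μ = ∫ ω in B, X ω ∂μ := by
  have hBX : B.indicator 1 * X = B.indicator X := by
    ext ω
    simp [← Set.indicator_mul_left]
  calc ∫ ω, μ[B.indicator 1 | m] ω * X ω ∂μ = ∫ ω, μ[B.indicator 1 * X | m] ω ∂μ :=
        integral_congr_ae (condExp_mul_of_stronglyMeasurable_right hX
          (hBX ▸ hXint.indicator hB) ((integrable_const 1).indicator hB)).symm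
    _ = ∫ ω in B, X ω ∂μ := by rw [integral_condExp hm, hBX, integral_indicator hB]

end CondExp

lemma integral_sum_mem_eq_sum_setIntegral {ι Ω : Type*} [Fintype ι] [MeasurableSpace Ω]
    {μ : Measure Ω} {S : Ω → Finset ι} (hS : ∀ i, MeasurableSet {ω | i ∈ S ω})
    {X : ι → Ω → ℝ} (hX : ∀ i, Integrable (X i) μ) :
    ∫ ω, ∑ i ∈ S ω, X i ω ∂μ = ∑ i, ∫ ω in {ω | i ∈ S ω}, X i ω ∂μ := by
  simp_rw [← integral_indicator (hS _)]
  rw [← integral_finsetSum _ fun i _ => (hX i).indicator (hS i)]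
  congr 1
  ext ω
  classical
  simp [Set.indicator_apply, sum_ite_mem]

theorem stmt4_general (n : ℕ) (F : Finset (Finset (Fin n)))
    (hemp : ∅ ∈ F)
    (c : ℝ) (hc : 1 ≤ c)
    (hcor : ∀ x ∈ convexHull ℝ
        {v : Fin n → ℝ | ∃ S ∈ F, v = fun i => if i ∈ S then (1 : ℝ) else 0},
      ∀ y : Fin n → ℝ, (∀ i, 0 ≤ y i) →
        ∑ i : Fin n, x i * y i
          ≤ c * ∑ A ∈ (Finset.univ : Finset (Fin n)).powerset,
              ((∏ i ∈ A, x i) * ∏ i ∈ Aᶜ, (1 - x i)) *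
                (F.filter (fun S => S ⊆ A)).sup'
                  ⟨∅, Finset.mem_filter.mpr ⟨hemp, Finset.empty_subset _⟩⟩
                  (fun S => ∑ i ∈ S, y i))
    {Ω : Type*} [MeasurableSpace Ω] (μ : Measure Ω) [IsProbabilityMeasure μ]
    (X : Fin n → Ω → ℝ) (hXmeas : ∀ i, Measurable (X i))
    (hindep : iIndepFun X μ)
    (hXnonneg : ∀ i ω, 0 ≤ X i ω) (hXint : ∀ i, Integrable (X i) μ)
    (S : Ω → Finset (Fin n)) (hSmeas : ∀ i, MeasurableSet {ω | i ∈ S ω})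
    (hfeas : (fun i => (μ {ω | i ∈ S ω}).toReal) ∈ convexHull ℝ
        {v : Fin n → ℝ | ∃ S ∈ F, v = fun i => if i ∈ S then (1 : ℝ) else 0}) :
    (∫ ω, ∑ i ∈ S ω, X i ω ∂μ)
      ≤ c * ∫ ω, F.sup' ⟨∅, hemp⟩ (fun T => ∑ i ∈ T, X i ω) ∂μ := by
  let B : Fin n → Set Ω := fun i => {ω | i ∈ S ω}
  let q : Fin n → ℝ := fun i => μ.real (B i)
  let y : Fin n → ℝ := fun i => (∫ ω in B i, X i ω ∂μ) / q i
  let m : Fin n → MeasurableSpace Ω := fun i => MeasurableSpace.comap (X i) inferInstance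
  have hm : ∀ i, m i ≤ ‹_› := fun i => (hXmeas i).comap_le
  let p : Fin n → Ω → ℝ := fun i => μ[(B i).indicator 1 | m i]
  have hq : ∀ i, ∫ ω, p i ω ∂μ = q i := fun i => by
    rw [integral_condExp (hm i), integral_indicator_one (hSmeas i)]
  have hqy : ∀ i, q i * y i = ∫ ω in B i, X i ω ∂μ := fun i =>
    mul_div_cancel_of_imp' fun h =>
      setIntegral_measure_zero _ ((measureReal_eq_zero_iff (measure_ne_top μ _)).1 h)
  have hy : ∀ i, q i * y i = ∫ ω, p i ω * X i ω ∂μ := fun i => by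
    rw [hqy, integral_condExp_indicator_one_mul (hm i) (hSmeas i)
      (comap_measurable (X i)).stronglyMeasurable (hXint i)]
  have hy0 : ∀ i, 0 ≤ y i := fun i =>
    div_nonneg (setIntegral_nonneg (hSmeas i) fun ω _ => hXnonneg i ω) measureReal_nonneg
  calc ∫ ω, ∑ i ∈ S ω, X i ω ∂μ = ∑ i, q i * y i := by
        rw [integral_sum_mem_eq_sum_setIntegral hSmeas hXint]
        exact sum_congr rfl fun i _ => (hqy i).symm
    _ ≤ c * ∑ A ∈ univ.powerset, bernoulliWeight q A * weightedRank F hemp y A :=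
        hcor q hfeas y hy0
    _ ≤ c * ∫ ω, F.sup' ⟨∅, hemp⟩ (fun T => ∑ i ∈ T, X i ω) ∂μ := by
        gcongr
        exact sum_bernoulliWeight_mul_weightedRank_le F hemp hm hindep.iIndep
          (fun i => comap_measurable (X i)) hXnonneg hXint
          (fun i => stronglyMeasurable_condExp.measurable)
          (fun i => condExp_indicator_one_mem_Icc_s4 (hm i) (hSmeas i)) hq hy

/-- If the correlation gap of `F` is at most `c`, then for every Bayesian combinatorial
selection instance over `F` (independent nonnegative integrable values) the value of any
ex ante feasible selection rule is at most `c` times the ex post optimum. -/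
theorem stmt4 (n : ℕ) (F : Finset (Finset (Fin n)))
    (hdc : ∀ S ∈ F, ∀ T ⊆ S, T ∈ F) (hemp : ∅ ∈ F)
    (c : ℝ) (hc : 1 ≤ c)
    (hcor : ∀ x ∈ convexHull ℝ
        {v : Fin n → ℝ | ∃ S ∈ F, v = fun i => if i ∈ S then (1 : ℝ) else 0},
      ∀ y : Fin n → ℝ, (∀ i, 0 ≤ y i) →
        ∑ i : Fin n, x i * y i
          ≤ c * ∑ A ∈ (Finset.univ : Finset (Fin n)).powerset,
              ((∏ i ∈ A, x i) * ∏ i ∈ Aᶜ, (1 - x i)) *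
                (F.filter (fun S => S ⊆ A)).sup'
                  ⟨∅, Finset.mem_filter.mpr ⟨hemp, Finset.empty_subset _⟩⟩
                  (fun S => ∑ i ∈ S, y i))
    {Ω : Type*} [MeasurableSpace Ω] (μ : Measure Ω) [IsProbabilityMeasure μ]
    (X : Fin n → Ω → ℝ) (hXmeas : ∀ i, Measurable (X i))
    (hindep : iIndepFun X μ)
    (hXnonneg : ∀ i ω, 0 ≤ X i ω) (hXint : ∀ i, Integrable (X i) μ)
    (S : Ω → Finset (Fin n)) (hSmeas : ∀ i, MeasurableSet {ω | i ∈ S ω})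
    (hfeas : (fun i => (μ {ω | i ∈ S ω}).toReal) ∈ convexHull ℝ
        {v : Fin n → ℝ | ∃ S ∈ F, v = fun i => if i ∈ S then (1 : ℝ) else 0}) :
    (∫ ω, ∑ i ∈ S ω, X i ω ∂μ)
      ≤ c * ∫ ω, F.sup' ⟨∅, hemp⟩ (fun T => ∑ i ∈ T, X i ω) ∂μ :=
  stmt4_general n F hemp c hc hcor μ X hXmeas hindep hXnonneg hXint S hSmeas hfeas
end
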